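/- Let K be the convex hull of a non-separable family of closed disks D₁, …, D_m in ℝ² with radii r₁, …, r_m, and set D = 2(r₁ + ⋯ + r_m) (the NS-diameter). Suppose planks P₁, …, P_N (closed regions between pairs of parallel lines, with widths w₁, …, w_N) form an r-fold packing in K: each P_i ∩ K is contained in K and every point of K lies in the interior of at most r of the sets P_i ∩ K, and moreover the orthogonal projection of P_i onto its normal direction is contained in the projection of K. Then w₁ + ⋯ + w_N ≤ r·D. -/

import Mathlib

/-!
Give each disk the weight `(r_j² - |x - c_j|²)^(-1/2)`. Its integral along a line is `π` when
the line crosses the open disk, so its total mass is `2π r_j` and the sum `f` of the weights has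
mass `π D`. Each line `⟪x, u_i⟫ = s` with `s ∈ [a_i, a_i + w_i]` meets `K`, hence by
non-separability meets a disk, so by Fubini `∫_{P_i} f ≥ π w_i`. Off the null plank boundaries a
point of `P_i` in the interior of `K` is interior to `P_i ∩ K`, so almost every point of the
support of `f` lies in at most `r` planks and `π ∑ w_i ≤ ∑ ∫_{P_i} f ≤ r ∫ f = r π D`.
-/

open Real MeasureTheory RealInnerProductSpace Set Filter
open scoped ENNReal

lemma inv_sqrt_sub_sq_eq_zero_of_le {A x : ℝ} (h : A ≤ x ^ 2) : (√(A - x ^ 2))⁻¹ = 0 := by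
  rw [Real.sqrt_eq_zero_of_nonpos (by linarith), inv_zero]

lemma integral_inv_sqrt_one_sub_sq : ∫ x in -1..1, (√(1 - x ^ 2))⁻¹ = π := by
  -- The substitution `x = cos θ` is packaged in Mathlib as the Chebyshev weight `measureT`.
  simpa [Real.sqrt_inv] using (Polynomial.Chebyshev.integral_measureT fun _ => (1 : ℝ)).symm.trans
    Polynomial.Chebyshev.integral_measureT_eq_integral_cos

lemma lintegral_ofReal_inv_sqrt_one_sub_sq :
    ∫⁻ x, ENNReal.ofReal (√(1 - x ^ 2))⁻¹ = ENNReal.ofReal π := by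
  have hsupp : (fun x : ℝ => ENNReal.ofReal (√(1 - x ^ 2))⁻¹).support ⊆ Ioc (-1) 1 := by
    intro x hx
    by_contra hx'
    have : 1 ≤ x ^ 2 := by
      simp only [mem_Ioc, not_and_or, not_lt, not_le] at hx'
      rcases hx' with h | h <;> nlinarith
    exact hx (by simp [inv_sqrt_sub_sq_eq_zero_of_le this])
  have hint : IntegrableOn (fun x : ℝ => (√(1 - x ^ 2))⁻¹) (Ioc (-1) 1) := by
    have := Polynomial.Chebyshev.intervalIntegrable_sqrt_one_sub_sq_inv
    rw [intervalIntegrable_iff_integrableOn_Ioc_of_le (by norm_num)] at this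
    simpa only [Real.sqrt_inv] using this
  rw [← setLIntegral_eq_of_support_subset hsupp,
    ← ofReal_integral_eq_lintegral_ofReal hint (Eventually.of_forall fun x => by positivity),
    ← intervalIntegral.integral_of_le (by norm_num), integral_inv_sqrt_one_sub_sq]

lemma lintegral_ofReal_inv_sqrt_sq_sub_sq {ρ : ℝ} (hρ : 0 < ρ) :
    ∫⁻ t, ENNReal.ofReal (√(ρ ^ 2 - t ^ 2))⁻¹ = ENNReal.ofReal π := by
  have hscale (x : ℝ) : ENNReal.ofReal (√(ρ ^ 2 - (ρ * x) ^ 2))⁻¹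
      = ENNReal.ofReal ρ⁻¹ * ENNReal.ofReal (√(1 - x ^ 2))⁻¹ := by
    rw [show ρ ^ 2 - (ρ * x) ^ 2 = ρ ^ 2 * (1 - x ^ 2) by ring, Real.sqrt_mul (sq_nonneg ρ),
      Real.sqrt_sq hρ.le, mul_inv, ENNReal.ofReal_mul (inv_nonneg.mpr hρ.le)]
  have hmap := lintegral_map (f := fun t : ℝ => ENNReal.ofReal (√(ρ ^ 2 - t ^ 2))⁻¹)
    (by fun_prop) (measurable_const_mul ρ) (μ := volume)
  rw [Real.map_volume_mul_left hρ.ne', lintegral_smul_measure, abs_of_pos (inv_pos.mpr hρ)] at hmap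
  simp_rw [hscale, lintegral_const_mul' _ _ ENNReal.ofReal_ne_top,
    lintegral_ofReal_inv_sqrt_one_sub_sq] at hmap
  rwa [smul_eq_mul, ENNReal.mul_right_inj (by simpa using hρ) ENNReal.ofReal_ne_top] at hmap

lemma lintegral_ofReal_inv_sqrt_sub_sub_sq (A q : ℝ) :
    ∫⁻ t, ENNReal.ofReal (√(A - (t - q) ^ 2))⁻¹ = if 0 < A then ENNReal.ofReal π else 0 := by
  rw [lintegral_sub_right_eq_self (fun t => ENNReal.ofReal (√(A - t ^ 2))⁻¹) q]
  split_ifs with hA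
  · simpa [Real.sq_sqrt hA.le] using lintegral_ofReal_inv_sqrt_sq_sub_sq (Real.sqrt_pos.mpr hA)
  · simp [inv_sqrt_sub_sq_eq_zero_of_le ((not_lt.mp hA).trans (sq_nonneg _))]

section Plane

variable {E : Type*} [NormedAddCommGroup E] [InnerProductSpace ℝ E]

lemma exists_orthonormalBasis_apply_zero_eq (hE : Module.finrank ℝ E = 2) {u : E}
    (hu : ‖u‖ = 1) : ∃ B : OrthonormalBasis (Fin 2) ℝ E, B 0 = u := by
  have : FiniteDimensional ℝ E := Module.finite_of_finrank_pos (by omega)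
  obtain ⟨B, hB⟩ := Orthonormal.exists_orthonormalBasis_extension_of_card_eq (𝕜 := ℝ)
    (v := fun _ : Fin 2 => u) (s := {0}) (by simpa using hE) (by simp [hu])
  exact ⟨B, hB 0 rfl⟩

namespace OrthonormalBasis

variable (B : OrthonormalBasis (Fin 2) ℝ E)

noncomputable def planeCoords (z : ℝ × ℝ) : E := z.1 • B 0 + z.2 • B 1

lemma planeCoords_eq_repr_symm (z : ℝ × ℝ) :
    B.planeCoords z = B.repr.symm (WithLp.toLp 2 (MeasurableEquiv.finTwoArrow.symm z)) := by
  simp [planeCoords, ← B.sum_repr_symm, Fin.sum_univ_two, MeasurableEquiv.finTwoArrow]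

lemma inner_planeCoords_zero (z : ℝ × ℝ) : ⟪B.planeCoords z, B 0⟫ = z.1 := by
  simp [planeCoords, inner_add_left, real_inner_smul_left]

lemma norm_planeCoords_sub_sq (z : ℝ × ℝ) (x : E) :
    ‖B.planeCoords z - x‖ ^ 2 = (z.1 - ⟪x, B 0⟫) ^ 2 + (z.2 - ⟪x, B 1⟫) ^ 2 := by
  rw [← B.sum_sq_inner_left, Fin.sum_univ_two]
  simp [planeCoords, inner_sub_left, inner_add_left, real_inner_smul_left]

variable [MeasurableSpace E] [BorelSpace E] [FiniteDimensional ℝ E]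

lemma measurePreserving_planeCoords : MeasurePreserving B.planeCoords := by
  rw [funext B.planeCoords_eq_repr_symm]
  exact B.measurePreserving_repr_symm.comp
    ((PiLp.volume_preserving_toLp (Fin 2)).comp (volume_preserving_finTwoArrow ℝ).symm)

lemma setLIntegral_inner_preimage {F : E → ℝ≥0∞} (hF : Measurable F) {S : Set ℝ}
    (hS : MeasurableSet S) :
    ∫⁻ x in (⟪·, B 0⟫) ⁻¹' S, F x = ∫⁻ s in S, ∫⁻ t, F (B.planeCoords (s, t)) := by
  have hpre : B.planeCoords ⁻¹' ((⟪·, B 0⟫) ⁻¹' S) = S ×ˢ univ := by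
    ext z
    simp [B.inner_planeCoords_zero]
  rw [← B.measurePreserving_planeCoords.setLIntegral_comp_preimage
      (measurableSet_preimage (by fun_prop) hS) hF, hpre, Measure.volume_eq_prod,
    ← Measure.restrict_prod_eq_prod_univ,
    lintegral_prod (fun z => F (B.planeCoords z))
      (hF.comp B.measurePreserving_planeCoords.measurable).aemeasurable]

end OrthonormalBasis

lemma ae_inner_ne [MeasurableSpace E] [BorelSpace E] [FiniteDimensional ℝ E]
    (hE : Module.finrank ℝ E = 2) {u : E} (hu : ‖u‖ = 1) (b : ℝ) : ∀ᵐ x : E, ⟪x, u⟫ ≠ b := by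
  obtain ⟨B, rfl⟩ := exists_orthonormalBasis_apply_zero_eq hE hu
  have := B.setLIntegral_inner_preimage (F := fun _ => 1) measurable_const
    (measurableSet_singleton b)
  rw [setLIntegral_one, setLIntegral_measure_zero _ _ (measure_singleton b)] at this
  exact measure_eq_zero_iff_ae_notMem.mp this

end Plane

section ChordBump

variable {E : Type*} [NormedAddCommGroup E]

/-- `(ρ² - ‖x - c‖²)^(-1/2)` on the open disk; outside it `√` of a nonpositive number is `0`
and `0⁻¹ = 0`, so the bump vanishes there. -/
noncomputable def chordBump (c : E) (ρ : ℝ) (x : E) : ℝ≥0∞ :=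
  ENNReal.ofReal (√(ρ ^ 2 - ‖x - c‖ ^ 2))⁻¹

lemma measurable_chordBump [MeasurableSpace E] [BorelSpace E] (c : E) (ρ : ℝ) :
    Measurable (chordBump c ρ) := by
  unfold chordBump
  fun_prop

lemma chordBump_eq_zero_of_notMem_ball {c x : E} {ρ : ℝ} (hρ : 0 ≤ ρ)
    (hx : x ∉ Metric.ball c ρ) : chordBump c ρ x = 0 := by
  rw [Metric.mem_ball, not_lt, dist_eq_norm] at hx
  simp [chordBump, inv_sqrt_sub_sq_eq_zero_of_le (pow_le_pow_left₀ hρ hx 2)]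

variable [InnerProductSpace ℝ E]

lemma OrthonormalBasis.lintegral_chordBump_planeCoords (B : OrthonormalBasis (Fin 2) ℝ E)
    (c : E) {ρ : ℝ} (hρ : 0 ≤ ρ) (s : ℝ) :
    ∫⁻ t, chordBump c ρ (B.planeCoords (s, t))
      = (Ioo (⟪c, B 0⟫ - ρ) (⟪c, B 0⟫ + ρ)).indicator (fun _ => ENNReal.ofReal π) s := by
  have hsq (t : ℝ) : ρ ^ 2 - ‖B.planeCoords (s, t) - c‖ ^ 2
      = (ρ ^ 2 - (s - ⟪c, B 0⟫) ^ 2) - (t - ⟪c, B 1⟫) ^ 2 := by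
    rw [B.norm_planeCoords_sub_sq]; ring
  have hchord : 0 < ρ ^ 2 - (s - ⟪c, B 0⟫) ^ 2 ↔ s ∈ Ioo (⟪c, B 0⟫ - ρ) (⟪c, B 0⟫ + ρ) := by
    rw [sub_pos, sq_lt_sq, abs_of_nonneg hρ, abs_lt, mem_Ioo]
    constructor <;> rintro ⟨h₁, h₂⟩ <;> constructor <;> linarith
  simp_rw [chordBump, hsq, lintegral_ofReal_inv_sqrt_sub_sub_sq, hchord, indicator_apply]

lemma lintegral_chordBump [MeasurableSpace E] [BorelSpace E] [FiniteDimensional ℝ E]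
    (hE : Module.finrank ℝ E = 2) (c : E) {ρ : ℝ} (hρ : 0 ≤ ρ) :
    ∫⁻ x, chordBump c ρ x = ENNReal.ofReal π * ENNReal.ofReal (2 * ρ) := by
  let B := (stdOrthonormalBasis ℝ E).reindex (finCongr hE)
  have := B.setLIntegral_inner_preimage (measurable_chordBump c ρ) MeasurableSet.univ
  rw [preimage_univ, Measure.restrict_univ, Measure.restrict_univ] at this
  simp_rw [this, B.lintegral_chordBump_planeCoords c hρ]
  rw [lintegral_indicator measurableSet_Ioo, setLIntegral_const, Real.volume_Ioo]
  ring_nf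

end ChordBump
section Disks

variable {ι E : Type*} [NormedAddCommGroup E] [InnerProductSpace ℝ E]

def IsNonSeparable (c : ι → E) (rad : ι → ℝ) : Prop :=
  ¬ ∃ (u : E) (s : ℝ), ‖u‖ = 1 ∧
    (∀ i, ∀ x ∈ Metric.closedBall (c i) (rad i), ⟪x, u⟫ ≠ s) ∧
    (∃ i, ∀ x ∈ Metric.closedBall (c i) (rad i), ⟪x, u⟫ < s) ∧
    (∃ j, ∀ x ∈ Metric.closedBall (c j) (rad j), s < ⟪x, u⟫)

lemma abs_inner_sub_le_of_mem_closedBall {c x u : E} {ρ : ℝ} (hu : ‖u‖ = 1)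
    (hx : x ∈ Metric.closedBall c ρ) : |⟪x, u⟫ - ⟪c, u⟫| ≤ ρ := by
  rw [← inner_sub_left]
  calc |⟪x - c, u⟫| ≤ ‖x - c‖ * ‖u‖ := abs_real_inner_le_norm _ _
    _ ≤ ρ := by rwa [hu, mul_one, ← dist_eq_norm, ← Metric.mem_closedBall]

lemma IsNonSeparable.exists_abs_inner_sub_le {c : ι → E} {rad : ι → ℝ}
    (h : IsNonSeparable c rad) {u x : E} (hu : ‖u‖ = 1)
    (hx : x ∈ convexHull ℝ (⋃ i, Metric.closedBall (c i) (rad i))) :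
    ∃ j, |⟪x, u⟫ - ⟪c j, u⟫| ≤ rad j := by
  by_contra! hfar
  set s := ⟪x, u⟫
  have hside : ∀ j, (∀ y ∈ Metric.closedBall (c j) (rad j), ⟪y, u⟫ < s) ∨
      (∀ y ∈ Metric.closedBall (c j) (rad j), s < ⟪y, u⟫) := by
    intro j
    rcases lt_abs.mp (hfar j) with hj | hj
    · exact .inl fun y hy => by linarith [(abs_le.mp (abs_inner_sub_le_of_mem_closedBall hu hy)).2]
    · exact .inr fun y hy => by linarith [(abs_le.mp (abs_inner_sub_le_of_mem_closedBall hu hy)).1]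
  have hlin : IsLinearMap ℝ (⟪·, u⟫) :=
    ⟨fun _ _ => inner_add_left _ _ _, fun _ _ => real_inner_smul_left _ _ _⟩
  -- The line `⟪·, u⟫ = s` misses every disk but meets their hull, so it has disks on both sides.
  refine h ⟨u, s, hu, fun i y hy => ?_, ?_, ?_⟩
  · rcases hside i with hi | hi
    exacts [(hi y hy).ne, (hi y hy).ne']
  · by_contra! habove
    have hall (j) := (hside j).resolve_left fun hj => by
      obtain ⟨y, hy, hsy⟩ := habove j
      exact (hj y hy).not_ge hsy
    exact lt_irrefl s (convexHull_min (iUnion_subset hall) (convex_halfSpace_gt hlin s) hx)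
  · by_contra! hbelow
    have hall (j) := (hside j).resolve_right fun hj => by
      obtain ⟨y, hy, hys⟩ := hbelow j
      exact (hj y hy).not_ge hys
    exact lt_irrefl s (convexHull_min (iUnion_subset hall) (convex_halfSpace_lt hlin s) hx)

lemma support_sum_chordBump_subset [Fintype ι] {c : ι → E} {rad : ι → ℝ}
    (hrad : ∀ j, 0 ≤ rad j) :
    (fun x => ∑ j, chordBump (c j) (rad j) x).support
      ⊆ interior (convexHull ℝ (⋃ j, Metric.closedBall (c j) (rad j))) := by
  intro x hx
  obtain ⟨j, -, hj⟩ := Finset.exists_ne_zero_of_sum_ne_zero hx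
  have hball : x ∈ Metric.ball (c j) (rad j) := by
    by_contra hx'
    exact hj (chordBump_eq_zero_of_notMem_ball (hrad j) hx')
  exact interior_mono (subset_convexHull ℝ _) (interior_maximal
    (subset_iUnion_of_subset j Metric.ball_subset_closedBall) Metric.isOpen_ball hball)

end Disks

section Planks

variable {ι E : Type*} [NormedAddCommGroup E] [InnerProductSpace ℝ E]

def plank (u : E) (a b : ℝ) : Set E := (⟪·, u⟫) ⁻¹' Icc a b

lemma measurableSet_plank [MeasurableSpace E] [OpensMeasurableSpace E] (u : E) (a b : ℝ) :
    MeasurableSet (plank u a b) :=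
  measurableSet_preimage (by fun_prop) measurableSet_Icc

lemma mem_interior_plank_inter {u x : E} {a b : ℝ} {K : Set E} (hx : x ∈ interior K)
    (hxu : ⟪x, u⟫ ∈ Ioo a b) : x ∈ interior (plank u a b ∩ K) := by
  rw [interior_inter]
  refine ⟨interior_maximal (preimage_mono Ioo_subset_Icc_self) ?_ hxu, hx⟩
  exact isOpen_Ioo.preimage (by fun_prop)

variable [MeasurableSpace E] [BorelSpace E] [FiniteDimensional ℝ E]

lemma ae_sum_indicator_plank_le [Fintype ι] (hE : Module.finrank ℝ E = 2) {u : ι → E}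
    (hu : ∀ i, ‖u i‖ = 1) {a b : ι → ℝ} {K : Set E} {r : ℕ}
    (hpack : ∀ x ∈ K, Nat.card {i // x ∈ interior (plank (u i) (a i) (b i) ∩ K)} ≤ r)
    {f : E → ℝ≥0∞} (hf : f.support ⊆ interior K) :
    ∀ᵐ x, ∑ i, (plank (u i) (a i) (b i)).indicator f x ≤ r * f x := by
  classical
  have hbdry : ∀ᵐ x : E, ∀ i, ⟪x, u i⟫ ≠ a i ∧ ⟪x, u i⟫ ≠ b i :=
    ae_all_iff.2 fun i => (ae_inner_ne hE (hu i) _).and (ae_inner_ne hE (hu i) _)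
  filter_upwards [hbdry] with x hx
  by_cases hfx : f x = 0
  · simp [hfx]
  have hxK : x ∈ interior K := hf hfx
  have hcard : (Finset.univ.filter fun i => x ∈ plank (u i) (a i) (b i)).card ≤ r :=
    calc _ ≤ (Finset.univ.filter fun i => x ∈ interior (plank (u i) (a i) (b i) ∩ K)).card :=
          Finset.card_le_card fun i hi => by
            simp only [Finset.mem_filter, Finset.mem_univ, true_and] at hi ⊢
            exact mem_interior_plank_inter hxK ⟨hi.1.lt_of_ne (hx i).1.symm, hi.2.lt_of_ne (hx i).2⟩
      _ = Nat.card {i // x ∈ interior (plank (u i) (a i) (b i) ∩ K)} := by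
          rw [Nat.card_eq_fintype_card, Fintype.card_subtype]
      _ ≤ r := hpack x (interior_subset hxK)
  calc ∑ i, (plank (u i) (a i) (b i)).indicator f x
      = (Finset.univ.filter fun i => x ∈ plank (u i) (a i) (b i)).card * f x := by
        simp [indicator_apply, Finset.sum_ite]
    _ ≤ r * f x := by gcongr

lemma ofReal_pi_mul_volume_le_setLIntegral_sum_chordBump [Fintype ι]
    (hE : Module.finrank ℝ E = 2) {c : ι → E} {rad : ι → ℝ} (hrad : ∀ j, 0 ≤ rad j) {u : E}
    (hu : ‖u‖ = 1) {S : Set ℝ} (hS : MeasurableSet S)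
    (hcover : ∀ s ∈ S, ∃ j, |s - ⟪c j, u⟫| ≤ rad j) :
    ENNReal.ofReal π * volume S ≤ ∫⁻ x in (⟪·, u⟫) ⁻¹' S, ∑ j, chordBump (c j) (rad j) x := by
  obtain ⟨B, rfl⟩ := exists_orthonormalBasis_apply_zero_eq hE hu
  rw [B.setLIntegral_inner_preimage (Finset.measurable_sum _ fun j _ => measurable_chordBump _ _)
    hS, ← setLIntegral_const]
  have hends : ∀ᵐ s : ℝ, ∀ j, s ≠ ⟪c j, B 0⟫ - rad j ∧ s ≠ ⟪c j, B 0⟫ + rad j :=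
    ae_all_iff.2 fun j => (Measure.ae_ne _ _).and (Measure.ae_ne _ _)
  refine lintegral_mono_ae ((ae_restrict_iff' hS).2 ?_)
  filter_upwards [hends] with s hs hsS
  obtain ⟨j, hj⟩ := hcover s hsS
  have hsj : s ∈ Ioo (⟪c j, B 0⟫ - rad j) (⟪c j, B 0⟫ + rad j) := by
    obtain ⟨h₁, h₂⟩ := abs_le.mp hj
    constructor
    · exact lt_of_le_of_ne (by linarith) (hs j).1.symm
    · exact lt_of_le_of_ne (by linarith) (hs j).2
  calc ENNReal.ofReal π = ∫⁻ t, chordBump (c j) (rad j) (B.planeCoords (s, t)) := by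
        rw [B.lintegral_chordBump_planeCoords _ (hrad j), indicator_of_mem hsj]
    _ ≤ ∫⁻ t, ∑ j, chordBump (c j) (rad j) (B.planeCoords (s, t)) :=
        lintegral_mono fun t => Finset.single_le_sum (f := fun j => chordBump (c j) (rad j) _)
          (fun _ _ => bot_le) (Finset.mem_univ j)

lemma lintegral_sum_chordBump [Fintype ι] (hE : Module.finrank ℝ E = 2) {c : ι → E}
    {rad : ι → ℝ} (hrad : ∀ j, 0 ≤ rad j) :
    ∫⁻ x, ∑ j, chordBump (c j) (rad j) x = ENNReal.ofReal π * ENNReal.ofReal (2 * ∑ j, rad j) := by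
  rw [lintegral_finsetSum _ fun j _ => measurable_chordBump _ _, Finset.mul_sum,
    ENNReal.ofReal_sum_of_nonneg fun j _ => by linarith [hrad j], Finset.mul_sum]
  exact Finset.sum_congr rfl fun j _ => lintegral_chordBump hE _ (hrad j)

end Planks

lemma sum_le_mul_of_le_setLIntegral {α ι : Type*} [MeasurableSpace α] [Fintype ι]
    {μ : Measure α} {P : ι → Set α} (hP : ∀ i, MeasurableSet (P i)) {f : α → ℝ≥0∞}
    (hf : AEMeasurable f μ) {κ : ℝ≥0∞} (hκ₀ : κ ≠ 0) (hκ : κ ≠ ⊤) {w : ι → ℝ} {r : ℕ}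
    {D : ℝ} (hD : 0 ≤ D) (hlower : ∀ i, κ * ENNReal.ofReal (w i) ≤ ∫⁻ x in P i, f x ∂μ)
    (hcount : ∀ᵐ x ∂μ, ∑ i, (P i).indicator f x ≤ r * f x)
    (hmass : ∫⁻ x, f x ∂μ = κ * ENNReal.ofReal D) :
    ∑ i, w i ≤ r * D := by
  have key : κ * ENNReal.ofReal (∑ i, w i) ≤ κ * ENNReal.ofReal (r * D) :=
    calc κ * ENNReal.ofReal (∑ i, w i) ≤ ∑ i, κ * ENNReal.ofReal (w i) := by
          rw [← Finset.mul_sum]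
          gcongr
          exact Finset.le_sum_of_subadditive _ ENNReal.ofReal_zero.le
            (fun _ _ => ENNReal.ofReal_add_le) _ _
      _ ≤ ∑ i, ∫⁻ x in P i, f x ∂μ := Finset.sum_le_sum fun i _ => hlower i
      _ = ∫⁻ x, ∑ i, (P i).indicator f x ∂μ := by
          rw [lintegral_finsetSum' _ fun i _ => hf.indicator (hP i)]
          simp_rw [lintegral_indicator (hP _)]
      _ ≤ ∫⁻ x, r * f x ∂μ := lintegral_mono_ae hcount
      _ = κ * ENNReal.ofReal (r * D) := by
          rw [lintegral_const_mul' _ _ (ENNReal.natCast_ne_top r), hmass,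
            ENNReal.ofReal_mul (Nat.cast_nonneg r), ENNReal.ofReal_natCast, mul_left_comm]
  rwa [ENNReal.mul_le_mul_iff_right hκ₀ hκ, ENNReal.ofReal_le_ofReal_iff (by positivity)] at key

theorem sum_plank_widths_le_of_packing_general (m N r : ℕ)
    (c : Fin m → EuclideanSpace ℝ (Fin 2)) (rad : Fin m → ℝ) (hrad : ∀ i, 0 < rad i)
    (hNS : ¬ ∃ (u : EuclideanSpace ℝ (Fin 2)) (s : ℝ), ‖u‖ = 1 ∧
      (∀ i, ∀ x ∈ Metric.closedBall (c i) (rad i), ⟪x, u⟫ ≠ s) ∧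
      (∃ i, ∀ x ∈ Metric.closedBall (c i) (rad i), ⟪x, u⟫ < s) ∧
      (∃ j, ∀ x ∈ Metric.closedBall (c j) (rad j), s < ⟪x, u⟫))
    (K : Set (EuclideanSpace ℝ (Fin 2)))
    (hK : K = convexHull ℝ (⋃ i, Metric.closedBall (c i) (rad i)))
    (u : Fin N → EuclideanSpace ℝ (Fin 2)) (hu : ∀ i, ‖u i‖ = 1)
    (a w : Fin N → ℝ)
    (P : Fin N → Set (EuclideanSpace ℝ (Fin 2)))
    (hP : ∀ i, P i = {x | a i ≤ ⟪x, u i⟫ ∧ ⟪x, u i⟫ ≤ a i + w i})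
    (hproj : ∀ i, Set.Icc (a i) (a i + w i) ⊆ (fun x => ⟪x, u i⟫) '' K)
    (hpack : ∀ x ∈ K, Nat.card {i : Fin N // x ∈ interior (P i ∩ K)} ≤ r) :
    (∑ i, w i) ≤ r * (2 * ∑ j, rad j) := by
  obtain rfl : P = fun i => plank (u i) (a i) (a i + w i) := funext hP
  have hE : Module.finrank ℝ (EuclideanSpace ℝ (Fin 2)) = 2 := finrank_euclideanSpace_fin
  have hrad₀ (j : Fin m) : 0 ≤ rad j := (hrad j).le
  have hcover (i : Fin N) : ∀ s ∈ Icc (a i) (a i + w i), ∃ j, |s - ⟪c j, u i⟫| ≤ rad j := by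
    rintro s hs
    obtain ⟨x, hxK, rfl⟩ := hproj i hs
    exact IsNonSeparable.exists_abs_inner_sub_le hNS (hu i) (hK ▸ hxK)
  refine sum_le_mul_of_le_setLIntegral (fun i => measurableSet_plank _ _ _)
    (Finset.measurable_sum _ fun j _ => measurable_chordBump _ _).aemeasurable
    (by simpa using pi_pos) ENNReal.ofReal_ne_top
    (mul_nonneg zero_le_two (Finset.sum_nonneg fun j _ => hrad₀ j)) (fun i => ?_)
    (ae_sum_indicator_plank_le hE hu hpack (hK ▸ support_sum_chordBump_subset hrad₀))
    (lintegral_sum_chordBump hE hrad₀)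
  have := ofReal_pi_mul_volume_le_setLIntegral_sum_chordBump hE hrad₀ (hu i) measurableSet_Icc
    (hcover i)
  rw [Real.volume_Icc, add_sub_cancel_left] at this
  exact this

/-- Theorem 6.1 (packing counterpart of Falconer's bound): let `K` be the convex hull of a
non-separable family of closed disks in `ℝ²` with radii `rad i`, and let `D = 2 ∑ rad i`
be the NS-diameter. If planks `P i` of widths `w i` form an `r`-fold packing in `K`, then
`∑ w i ≤ r D`. -/
theorem sum_plank_widths_le_of_packing (m N r : ℕ) (hm : 0 < m)
    (c : Fin m → EuclideanSpace ℝ (Fin 2)) (rad : Fin m → ℝ) (hrad : ∀ i, 0 < rad i)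
    (hNS : ¬ ∃ (u : EuclideanSpace ℝ (Fin 2)) (s : ℝ), ‖u‖ = 1 ∧
      (∀ i, ∀ x ∈ Metric.closedBall (c i) (rad i), ⟪x, u⟫ ≠ s) ∧
      (∃ i, ∀ x ∈ Metric.closedBall (c i) (rad i), ⟪x, u⟫ < s) ∧
      (∃ j, ∀ x ∈ Metric.closedBall (c j) (rad j), s < ⟪x, u⟫))
    (K : Set (EuclideanSpace ℝ (Fin 2)))
    (hK : K = convexHull ℝ (⋃ i, Metric.closedBall (c i) (rad i)))
    (u : Fin N → EuclideanSpace ℝ (Fin 2)) (hu : ∀ i, ‖u i‖ = 1)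
    (a w : Fin N → ℝ) (hw : ∀ i, 0 ≤ w i)
    (P : Fin N → Set (EuclideanSpace ℝ (Fin 2)))
    (hP : ∀ i, P i = {x | a i ≤ ⟪x, u i⟫ ∧ ⟪x, u i⟫ ≤ a i + w i})
    (hproj : ∀ i, Set.Icc (a i) (a i + w i) ⊆ (fun x => ⟪x, u i⟫) '' K)
    (hpack : ∀ x ∈ K, Nat.card {i : Fin N // x ∈ interior (P i ∩ K)} ≤ r) :
    (∑ i, w i) ≤ r * (2 * ∑ j, rad j) :=
  sum_plank_widths_le_of_packing_general m N r c rad hrad hNS K hK u hu a w P hP hproj hpack
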